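/- Let x̂ ∈ ℝⁿ, ŷ ∈ ℝᵐ, Ŵ ∈ ℝ^{n×m}, u ∈ ℝⁿ, v ∈ ℝᵐ. Define Ĥ := [[x̂x̂ᵀ, Ŵ],[Ŵᵀ, ŷŷᵀ]] ∈ ℝ^{(n+m)×(n+m)}, ĥ := (x̂; ŷ) ∈ ℝ^{n+m}, and z := (1/√2)·(u; v). Then ⟨zzᵀ, Ĥ⟩ − (zᵀĥ)² = uᵀ(Ŵ − x̂ŷᵀ)v = ⟨uvᵀ, Ŵ⟩ − (uᵀx̂)(vᵀŷ). In particular, the symmetric inequality ⟨zzᵀ, H⟩ − (zᵀh)² ≤ 0 and the bilinear inequality ⟨uvᵀ, W⟩ − (uᵀx)(vᵀy) ≤ 0 are violated by the same amount at the corresponding lifted points (ĥ, Ĥ) and (x̂, ŷ, Ŵ). -/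

import Mathlib

/-!
Expanding the quadratic form of the block matrix `Ĥ` at `(u; v)`, the rank-one diagonal blocks
contribute `(uᵀx̂)² + (vᵀŷ)²`, which cancels against the square terms of `((u; v)ᵀĥ)²`; what is
left is twice the bilinear gap `uᵀŴv - (uᵀx̂)(vᵀŷ)`, and the factor `1/√2` in `z` halves it.
-/

namespace Matrix

variable {m n R : Type*} [Fintype m] [Fintype n]

section CommSemiring
variable [CommSemiring R]

theorem trace_transpose_vecMulVec_mul (a : m → R) (b : n → R) (M : Matrix m n R) :
    ((vecMulVec a b)ᵀ * M).trace = a ⬝ᵥ M *ᵥ b := by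
  rw [transpose_vecMulVec, trace_mul_comm, mul_vecMulVec, trace_vecMulVec, dotProduct_comm]

theorem dotProduct_vecMulVec_mulVec (u x : m → R) (y v : n → R) :
    u ⬝ᵥ vecMulVec x y *ᵥ v = (u ⬝ᵥ x) * (y ⬝ᵥ v) := by
  rw [vecMulVec_mulVec, op_smul_eq_smul, dotProduct_smul, smul_eq_mul, mul_comm]

theorem sumElim_dotProduct_fromBlocks_mulVec_sumElim (A : Matrix m m R) (B : Matrix m n R)
    (C : Matrix n m R) (D : Matrix n n R) (u : m → R) (v : n → R) :
    Sum.elim u v ⬝ᵥ fromBlocks A B C D *ᵥ Sum.elim u v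
      = u ⬝ᵥ A *ᵥ u + u ⬝ᵥ B *ᵥ v + v ⬝ᵥ C *ᵥ u + v ⬝ᵥ D *ᵥ v := by
  rw [fromBlocks_mulVec, sumElim_dotProduct_sumElim]
  simp only [Sum.elim_comp_inl, Sum.elim_comp_inr, dotProduct_add]
  ring

theorem smul_dotProduct_mulVec_smul (c : R) (w : m → R) (M : Matrix m m R) :
    c • w ⬝ᵥ M *ᵥ (c • w) = c ^ 2 * (w ⬝ᵥ M *ᵥ w) := by
  rw [mulVec_smul, smul_dotProduct, dotProduct_smul, smul_eq_mul, smul_eq_mul, sq, mul_assoc]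

end CommSemiring

theorem sumElim_dotProduct_rankOneBlocks_mulVec_sub_sq [CommRing R] (x u : m → R) (y v : n → R)
    (W : Matrix m n R) :
    Sum.elim u v ⬝ᵥ fromBlocks (vecMulVec x x) W Wᵀ (vecMulVec y y) *ᵥ Sum.elim u v
        - (Sum.elim u v ⬝ᵥ Sum.elim x y) ^ 2
      = 2 * (u ⬝ᵥ W *ᵥ v - (u ⬝ᵥ x) * (v ⬝ᵥ y)) := by
  rw [sumElim_dotProduct_fromBlocks_mulVec_sumElim, sumElim_dotProduct_sumElim,
    dotProduct_transpose_mulVec, dotProduct_vecMulVec_mulVec, dotProduct_vecMulVec_mulVec,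
    dotProduct_comm x u, dotProduct_comm y v]
  ring

end Matrix

open Matrix

/-- with `Ĥ := [[x̂x̂', Ŵ],[Ŵ', ŷŷ']]`, `ĥ := (x̂; ŷ)`, and
`z := (1/√2)(u; v)`, we have `⟨zz', Ĥ⟩ - (z'ĥ)² = u'(Ŵ - x̂ŷ')v
= ⟨uv', Ŵ⟩ - (u'x̂)(v'ŷ)`: the symmetric and bilinear inequalities are violated
by the same amount at the corresponding lifted points. -/
theorem stmt3 {n m : ℕ}
    (xh u : Fin n → ℝ) (yh v : Fin m → ℝ) (Wh : Matrix (Fin n) (Fin m) ℝ)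
    (Hh : Matrix (Fin n ⊕ Fin m) (Fin n ⊕ Fin m) ℝ)
    (hHh : Hh = fromBlocks (vecMulVec xh xh) Wh Whᵀ (vecMulVec yh yh))
    (hv' : Fin n ⊕ Fin m → ℝ) (hhv : hv' = Sum.elim xh yh)
    (z : Fin n ⊕ Fin m → ℝ) (hz : z = (Real.sqrt 2)⁻¹ • Sum.elim u v) :
    ((vecMulVec z z)ᵀ * Hh).trace - (z ⬝ᵥ hv') ^ 2
        = u ⬝ᵥ ((Wh - vecMulVec xh yh) *ᵥ v)
      ∧ ((vecMulVec z z)ᵀ * Hh).trace - (z ⬝ᵥ hv') ^ 2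
        = ((vecMulVec u v)ᵀ * Wh).trace - (u ⬝ᵥ xh) * (v ⬝ᵥ yh) := by
  have hc : (Real.sqrt 2)⁻¹ ^ 2 * 2 = 1 := by
    rw [inv_pow, Real.sq_sqrt zero_le_two, inv_mul_cancel₀ two_ne_zero]
  have gap : ((vecMulVec z z)ᵀ * Hh).trace - (z ⬝ᵥ hv') ^ 2
      = u ⬝ᵥ Wh *ᵥ v - (u ⬝ᵥ xh) * (v ⬝ᵥ yh) := by
    rw [hHh, hhv, hz, trace_transpose_vecMulVec_mul, smul_dotProduct_mulVec_smul, smul_dotProduct,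
      smul_eq_mul, mul_pow, ← mul_sub, sumElim_dotProduct_rankOneBlocks_mulVec_sub_sq, ← mul_assoc,
      hc, one_mul]
  refine ⟨?_, ?_⟩
  · rw [gap, sub_mulVec, dotProduct_sub, dotProduct_vecMulVec_mulVec, dotProduct_comm yh v]
  · rw [gap, trace_transpose_vecMulVec_mul]
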